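/- As d → ∞, σ_d² := (α_d + α_d² - β_d - μ_d α_d)/γ_d tends to 0, where α_d = Σ_p (p-1)²/p^{d+2}, β_d = Σ_p ((p-1)²/p^{d+2})², γ_d = 1 - Π_p (1 - (p-1)²/p^{d+2}), and μ_d = α_d/γ_d. -/

import Mathlib

/-!
Write `A = ∑ x_p`, `B = ∑ x_p²` and `P = ∏ (1 - x_p)` for the weights `x_p = (p-1)²/p^(d+2)`.
Since `1 - A ≤ P ≤ exp (-A) ≤ 1 / (1 + A)`, the quantity `γ = 1 - P` satisfies
`A / (1 + A) ≤ γ ≤ A`, so `μ = A / γ` lies in `[1, 1 + A]`; with `0 ≤ B ≤ A²` the numerator of `σ²`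
is at most `A²` in absolute value. Hence `|σ²| ≤ A (1 + A)`, and `A ≤ 2^(2-d) ∑ p⁻² → 0`.
-/

open Filter Topology Real

theorem Finset.one_sub_sum_le_prod_one_sub {ι R : Type*} [CommRing R] [LinearOrder R]
    [IsStrictOrderedRing R] (s : Finset ι) {f : ι → R} (h0 : ∀ i ∈ s, 0 ≤ f i)
    (h1 : ∀ i ∈ s, f i ≤ 1) : 1 - ∑ i ∈ s, f i ≤ ∏ i ∈ s, (1 - f i) := by
  induction s using Finset.cons_induction with
  | empty => simp
  | cons a s ha ih =>
    simp only [Finset.mem_cons, forall_eq_or_imp] at h0 h1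
    rw [Finset.sum_cons, Finset.prod_cons]
    have hs : 0 ≤ ∑ i ∈ s, f i := Finset.sum_nonneg h0.2
    have hprod := mul_le_mul_of_nonneg_left (ih h0.2 h1.2) (sub_nonneg.2 h1.1)
    nlinarith [mul_nonneg h0.1 hs]

section WeightedProducts

variable {ι : Type*} {x : ι → ℝ}

theorem Real.multipliable_one_sub_of_summable (hx : Summable x) :
    Multipliable fun i => 1 - x i := by
  simpa only [sub_eq_add_neg] using Real.multipliable_one_add_of_summable hx.neg

theorem one_sub_tsum_le_tprod_one_sub (h0 : ∀ i, 0 ≤ x i) (h1 : ∀ i, x i ≤ 1)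
    (hx : Summable x) : 1 - ∑' i, x i ≤ ∏' i, (1 - x i) := by
  refine ge_of_tendsto (Real.multipliable_one_sub_of_summable hx).hasProd
    (Eventually.of_forall fun s => ?_)
  have hsum : ∑ i ∈ s, x i ≤ ∑' i, x i := hx.sum_le_tsum s fun i _ => h0 i
  linarith [s.one_sub_sum_le_prod_one_sub (fun i _ => h0 i) (fun i _ => h1 i)]

theorem tprod_one_sub_le_exp_neg_tsum (h1 : ∀ i, x i ≤ 1) (hx : Summable x) :
    ∏' i, (1 - x i) ≤ exp (-∑' i, x i) := by
  have hexp : Tendsto (fun s : Finset ι => exp (∑ i ∈ s, -x i)) atTop (𝓝 (exp (-∑' i, x i))) :=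
    (continuous_exp.tendsto _).comp hx.hasSum.neg
  refine le_of_tendsto_of_tendsto' (Real.multipliable_one_sub_of_summable hx).hasProd hexp
    fun s => ?_
  rw [exp_sum]
  exact Finset.prod_le_prod (fun i _ => sub_nonneg.2 (h1 i))
    fun i _ => by linarith [add_one_le_exp (-x i)]

theorem tprod_one_sub_le_inv_one_add_tsum (h0 : ∀ i, 0 ≤ x i) (h1 : ∀ i, x i ≤ 1)
    (hx : Summable x) : ∏' i, (1 - x i) ≤ (1 + ∑' i, x i)⁻¹ := by
  have hA : 0 ≤ ∑' i, x i := tsum_nonneg h0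
  calc ∏' i, (1 - x i) ≤ exp (-∑' i, x i) := tprod_one_sub_le_exp_neg_tsum h1 hx
    _ = (exp (∑' i, x i))⁻¹ := exp_neg _
    _ ≤ (1 + ∑' i, x i)⁻¹ :=
      inv_anti₀ (by positivity) (by linarith [add_one_le_exp (∑' i, x i)])

theorem tsum_sq_le_sq_tsum (h0 : ∀ i, 0 ≤ x i) (hx : Summable x) :
    ∑' i, x i ^ 2 ≤ (∑' i, x i) ^ 2 := by
  have hle : ∀ i, x i ^ 2 ≤ (∑' j, x j) * x i := fun i => by
    rw [sq]
    exact mul_le_mul_of_nonneg_right (hx.le_tsum i fun j _ => h0 j) (h0 i)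
  calc ∑' i, x i ^ 2 ≤ ∑' i, (∑' j, x j) * x i :=
        ((hx.mul_left _).of_nonneg_of_le (fun i => sq_nonneg _) hle).tsum_le_tsum hle
          (hx.mul_left _)
    _ = (∑' i, x i) ^ 2 := by rw [tsum_mul_left, sq]

noncomputable def sigmaSq (x : ι → ℝ) : ℝ :=
  let α : ℝ := ∑' i, x i
  let β : ℝ := ∑' i, (x i) ^ 2
  let γ : ℝ := 1 - ∏' i, (1 - x i)
  let μ : ℝ := α / γ
  (α + α ^ 2 - β - μ * α) / γ

theorem abs_sigmaSq_formula_le {A B G : ℝ} (hA0 : 0 ≤ A) (hB0 : 0 ≤ B) (hBA : B ≤ A ^ 2)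
    (hGA : G ≤ A) (hAG : A ≤ (1 + A) * G) :
    |(A + A ^ 2 - B - A / G * A) / G| ≤ A * (1 + A) := by
  rcases le_or_gt G 0 with hG | hG
  · have hG0 : G = 0 := by nlinarith
    simp only [hG0, div_zero, abs_zero]
    positivity
  have hA : 0 < A := hG.trans_le hGA
  have hμ1 : A ≤ A / G * A := le_mul_of_one_le_left hA.le ((one_le_div hG).2 hGA)
  have hμ2 : A / G * A ≤ (1 + A) * A :=
    mul_le_mul_of_nonneg_right ((div_le_iff₀ hG).2 hAG) hA.le
  rw [abs_div, abs_of_pos hG, div_le_iff₀ hG]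
  calc |A + A ^ 2 - B - A / G * A| ≤ A ^ 2 := abs_le.2 ⟨by linarith, by linarith⟩
    _ ≤ A * (1 + A) * G := by nlinarith

theorem abs_sigmaSq_le (h0 : ∀ i, 0 ≤ x i) (h1 : ∀ i, x i ≤ 1) (hx : Summable x) :
    |sigmaSq x| ≤ (∑' i, x i) * (1 + ∑' i, x i) := by
  have hA : 0 ≤ ∑' i, x i := tsum_nonneg h0
  have hupper := tprod_one_sub_le_inv_one_add_tsum h0 h1 hx
  rw [← one_div, le_div_iff₀ (by positivity)] at hupper
  exact abs_sigmaSq_formula_le hA (tsum_nonneg fun i => sq_nonneg _) (tsum_sq_le_sq_tsum h0 hx)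
    (by linarith [one_sub_tsum_le_tprod_one_sub h0 h1 hx]) (by linarith)

end WeightedProducts

noncomputable def primeWeight (d : ℕ) (p : Nat.Primes) : ℝ :=
  ((p : ℕ) - 1 : ℝ) ^ 2 / ((p : ℕ) : ℝ) ^ (d + 2)

theorem Nat.Primes.two_le_cast (p : Nat.Primes) : (2 : ℝ) ≤ (p : ℕ) := by
  exact_mod_cast p.2.two_le

namespace primeWeight

variable (d : ℕ) (p : Nat.Primes)

theorem nonneg : 0 ≤ primeWeight d p :=
  div_nonneg (sq_nonneg _) (pow_nonneg (by linarith [p.two_le_cast]) _)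

theorem le_inv_pow : primeWeight d p ≤ (((p : ℕ) : ℝ) ^ d)⁻¹ := by
  have hp := p.two_le_cast
  rw [primeWeight, div_le_iff₀ (by positivity), pow_add, ← mul_assoc,
    inv_mul_cancel₀ (by positivity), one_mul]
  nlinarith

theorem le_one : primeWeight d p ≤ 1 :=
  (le_inv_pow d p).trans (inv_le_one_of_one_le₀ (one_le_pow₀ (by linarith [p.two_le_cast])))

theorem add_two_le : primeWeight (d + 2) p ≤ (2⁻¹) ^ d * (((p : ℕ) : ℝ) ^ 2)⁻¹ := by
  refine (le_inv_pow (d + 2) p).trans ?_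
  rw [pow_add, mul_inv, ← inv_pow]
  gcongr
  exact p.two_le_cast

end primeWeight

theorem summable_inv_sq_primes : Summable fun p : Nat.Primes => (((p : ℕ) : ℝ) ^ 2)⁻¹ :=
  (Real.summable_nat_pow_inv.2 one_lt_two).comp_injective Subtype.val_injective

theorem summable_primeWeight_add_two (d : ℕ) : Summable (primeWeight (d + 2)) :=
  (summable_inv_sq_primes.mul_left _).of_nonneg_of_le (primeWeight.nonneg _)
    (primeWeight.add_two_le d)

theorem tendsto_tsum_primeWeight_add_two :
    Tendsto (fun d => ∑' p, primeWeight (d + 2) p) atTop (𝓝 0) := by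
  have hgeom : Tendsto (fun d : ℕ => (2⁻¹ : ℝ) ^ d * ∑' p : Nat.Primes, (((p : ℕ) : ℝ) ^ 2)⁻¹)
      atTop (𝓝 0) := by
    simpa using (tendsto_pow_atTop_nhds_zero_of_lt_one (by norm_num : (0 : ℝ) ≤ 2⁻¹)
      (by norm_num)).mul_const (∑' p : Nat.Primes, (((p : ℕ) : ℝ) ^ 2)⁻¹)
  refine squeeze_zero (fun d => tsum_nonneg (primeWeight.nonneg _)) (fun d => ?_) hgeom
  rw [← tsum_mul_left]
  exact (summable_primeWeight_add_two d).tsum_le_tsum (primeWeight.add_two_le d)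
    (summable_inv_sq_primes.mul_left _)

theorem sigma_sq_tendsto_zero :
    Filter.Tendsto
      (fun d : ℕ =>
        let α : ℝ := ∑' p : Nat.Primes, ((p : ℕ) - 1 : ℝ)^2 / ((p : ℕ) : ℝ)^(d + 2)
        let β : ℝ := ∑' p : Nat.Primes, (((p : ℕ) - 1 : ℝ)^2 / ((p : ℕ) : ℝ)^(d + 2))^2
        let γ : ℝ := 1 - ∏' p : Nat.Primes, (1 - ((p : ℕ) - 1 : ℝ)^2 / ((p : ℕ) : ℝ)^(d + 2))
        let μ : ℝ := α / γ
        (α + α^2 - β - μ * α) / γ)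
      Filter.atTop (nhds 0) := by
  change Tendsto (fun d => sigmaSq (primeWeight d)) atTop (𝓝 0)
  rw [← tendsto_add_atTop_iff_nat 2]
  have hA := tendsto_tsum_primeWeight_add_two
  have hbound : Tendsto (fun d => (∑' p, primeWeight (d + 2) p) *
      (1 + ∑' p, primeWeight (d + 2) p)) atTop (𝓝 0) := by
    simpa using hA.mul (hA.const_add 1)
  exact squeeze_zero_norm (fun d => abs_sigmaSq_le (primeWeight.nonneg _) (primeWeight.le_one _)
    (summable_primeWeight_add_two d)) hbound
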